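/- arXiv:1501.07193 — 2 statements merged into one kernel-verified Lean document; each statement's English description precedes it below -/
import Mathlib

section
/- Let τ be an M-topology on M : X → ℕ and let A, B : X → ℕ be sub-M-sets of M. Then ext(A ∪ B) = ext(A) ∩ ext(B), i.e., for every x ∈ X, ext(A ∪ B)(x) = min(ext(A)(x), ext(B)(x)). -/
/-- M-complement of a sub-M-set: `Aᶜ = M ⊖ A` (pointwise truncated subtraction). -/
def mcompl {X : Type*} (M A : X → ℕ) : X → ℕ := fun x => M x - A x

/-- `τ` is an M-topology on the multiset `M : X → ℕ`. -/
structure IsMTopology {X : Type*} (M : X → ℕ) (τ : Set (X → ℕ)) : Prop where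
  le_of_mem : ∀ N ∈ τ, N ≤ M
  top_mem : M ∈ τ
  zero_mem : (0 : X → ℕ) ∈ τ
  sSup_mem : ∀ S ⊆ τ, (fun x => sSup {n | ∃ N ∈ S, N x = n}) ∈ τ
  min_mem : ∀ U ∈ τ, ∀ V ∈ τ, (fun x => min (U x) (V x)) ∈ τ

/-- Interior: pointwise supremum of all open `G ∈ τ` with `G ≤ A`. -/
noncomputable def mint {X : Type*} (τ : Set (X → ℕ)) (A : X → ℕ) : X → ℕ :=
  fun x => sSup {n | ∃ G ∈ τ, G ≤ A ∧ G x = n}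

/-- Closure: pointwise infimum of all closed `K` with `A ≤ K ≤ M`. -/
noncomputable def mcl {X : Type*} (M : X → ℕ) (τ : Set (X → ℕ)) (A : X → ℕ) : X → ℕ :=
  fun x => sInf {n | ∃ K, mcompl M K ∈ τ ∧ A ≤ K ∧ K ≤ M ∧ K x = n}

/-- Exterior: interior of the M-complement. -/
noncomputable def mext {X : Type*} (M : X → ℕ) (τ : Set (X → ℕ)) (A : X → ℕ) : X → ℕ :=
  mint τ (mcompl M A)

/-- Boundary: `bd(A) = cl(A) ∩ cl(Aᶜ)` (pointwise min). -/
noncomputable def mbd {X : Type*} (M : X → ℕ) (τ : Set (X → ℕ)) (A : X → ℕ) : X → ℕ :=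
  fun x => min (mcl M τ A x) (mcl M τ (mcompl M A) x)

/-!
Truncated subtraction is antitone, so the complement of `A ∪ B` is `Aᶜ ∩ Bᶜ`, and the exterior of
`A ∪ B` is the interior of that intersection. The interior distributes over `∩`: it is the largest
open sub-M-set below its argument (open because `τ` is closed under suprema), and `int U ∩ int V`
is open because `τ` is closed under `min`.
-/

section Lemmas

variable {X : Type*}

theorem mcompl_sup (M A B : X → ℕ) : mcompl M (A ⊔ B) = mcompl M A ⊓ mcompl M B :=
  funext fun x => (show Antitone (M x - ·) from fun _ _ h => tsub_le_tsub_left h _).map_max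

section Interior

variable (τ : Set (X → ℕ))

theorem mint_le_self (A : X → ℕ) : mint τ A ≤ A := fun x =>
  csSup_le' <| by rintro _ ⟨G, -, hGA, rfl⟩; exact hGA x

theorem le_mint {A G : X → ℕ} (hG : G ∈ τ) (hGA : G ≤ A) : G ≤ mint τ A := fun x =>
  le_csSup ⟨A x, by rintro _ ⟨H, -, hHA, rfl⟩; exact hHA x⟩ ⟨G, hG, hGA, rfl⟩

theorem mint_mono {A B : X → ℕ} (h : A ≤ B) : mint τ A ≤ mint τ B := fun x =>
  csSup_le' <| by
    rintro _ ⟨G, hG, hGA, rfl⟩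
    exact le_mint τ hG (hGA.trans h) x

end Interior

namespace IsMTopology

variable {M : X → ℕ} {τ : Set (X → ℕ)}

theorem mint_mem (hτ : IsMTopology M τ) (A : X → ℕ) : mint τ A ∈ τ := by
  convert hτ.sSup_mem {G | G ∈ τ ∧ G ≤ A} fun _ hG => hG.1 using 2 with x
  simp only [mint, Set.mem_ofPred_eq, and_assoc]

theorem inf_mem (hτ : IsMTopology M τ) {U V : X → ℕ} (hU : U ∈ τ) (hV : V ∈ τ) : U ⊓ V ∈ τ :=
  hτ.min_mem U hU V hV

theorem mint_inf (hτ : IsMTopology M τ) (U V : X → ℕ) :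
    mint τ (U ⊓ V) = mint τ U ⊓ mint τ V :=
  le_antisymm
    (le_inf (mint_mono τ inf_le_left) (mint_mono τ inf_le_right))
    (le_mint τ (hτ.inf_mem (hτ.mint_mem U) (hτ.mint_mem V))
      (inf_le_inf (mint_le_self τ U) (mint_le_self τ V)))

end IsMTopology

end Lemmas

theorem ext_union_general {X : Type*} (M : X → ℕ) (τ : Set (X → ℕ)) (hτ : IsMTopology M τ)
    (A B : X → ℕ) :
    ∀ x, mext M τ (fun y => max (A y) (B y)) x = min (mext M τ A x) (mext M τ B x) := by
  intro x
  change mint τ (mcompl M (A ⊔ B)) x = (mint τ (mcompl M A) ⊓ mint τ (mcompl M B)) x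
  rw [mcompl_sup, hτ.mint_inf]

theorem ext_union {X : Type*} (M : X → ℕ) (τ : Set (X → ℕ)) (hτ : IsMTopology M τ)
    (A B : X → ℕ) (hA : A ≤ M) (hB : B ≤ M) :
    ∀ x, mext M τ (fun y => max (A y) (B y)) x = min (mext M τ A x) (mext M τ B x) :=
  ext_union_general M τ hτ A B
end

section
/- Let τ be an M-topology on M : X → ℕ and let A : X → ℕ be a sub-M-set of M. Then (bd(A))ᶜ = int(A) ∪ ext(A), i.e., for every x ∈ X, M(x) − bd(A)(x) = max(int(A)(x), ext(A)(x)). -/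
/-! The closure of a sub-M-set is the complement of the interior of its complement,
`cl B = (int Bᶜ)ᶜ`; the infimum defining `cl B` is attained at the complement of an open set
realising `int Bᶜ`. Hence `bd A = (ext A)ᶜ ∩ (int A)ᶜ`, and complementing a pointwise minimum of
complements gives the pointwise maximum. -/

section MComplement

variable {X : Type*} {M A : X → ℕ}

lemma mcompl_le : mcompl M A ≤ M := fun x => Nat.sub_le (M x) (A x)

lemma mcompl_mcompl (hA : A ≤ M) : mcompl M (mcompl M A) = A := by
  funext x
  have : A x ≤ M x := hA x
  simp only [mcompl]
  omega

lemma mcompl_self : mcompl M M = 0 := by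
  funext x
  simp [mcompl]

end MComplement

namespace IsMTopology

variable {X : Type*} {M : X → ℕ} {τ : Set (X → ℕ)}

lemma bddAbove_open_values (hτ : IsMTopology M τ) (B : X → ℕ) (x : X) :
    BddAbove {n | ∃ G ∈ τ, G ≤ B ∧ G x = n} :=
  ⟨M x, by rintro n ⟨G, hG, -, rfl⟩; exact hτ.le_of_mem G hG x⟩

lemma exists_open_eq_mint (hτ : IsMTopology M τ) (B : X → ℕ) (x : X) :
    ∃ G ∈ τ, G ≤ B ∧ G x = mint τ B x :=
  Nat.sSup_mem (s := {n | ∃ G ∈ τ, G ≤ B ∧ G x = n})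
    ⟨0, 0, hτ.zero_mem, fun _ => Nat.zero_le _, rfl⟩ (hτ.bddAbove_open_values B x)

lemma le_mint (hτ : IsMTopology M τ) {B G : X → ℕ} (hG : G ∈ τ) (hGB : G ≤ B) (x : X) :
    G x ≤ mint τ B x :=
  le_csSup (hτ.bddAbove_open_values B x) ⟨G, hG, hGB, rfl⟩

lemma mint_le_top (hτ : IsMTopology M τ) (B : X → ℕ) (x : X) : mint τ B x ≤ M x := by
  obtain ⟨G, hG, -, hGx⟩ := hτ.exists_open_eq_mint B x
  exact hGx ▸ hτ.le_of_mem G hG x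

lemma mcl_eq_mcompl_mint_mcompl (hτ : IsMTopology M τ) {B : X → ℕ} (hB : B ≤ M) :
    mcl M τ B = mcompl M (mint τ (mcompl M B)) := by
  funext x
  apply le_antisymm
  · obtain ⟨G, hG, hGB, hGx⟩ := hτ.exists_open_eq_mint (mcompl M B) x
    have hGM : G ≤ M := hτ.le_of_mem G hG
    have hBG : B ≤ mcompl M G := fun y => by
      have : G y ≤ M y - B y := hGB y
      have : B y ≤ M y := hB y
      simp only [mcompl]
      omega
    exact Nat.sInf_le ⟨mcompl M G, (mcompl_mcompl hGM).symm ▸ hG, hBG, mcompl_le, by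
      simp only [mcompl, hGx]⟩
  · refine le_csInf ⟨M x, M, mcompl_self (M := M) ▸ hτ.zero_mem, hB, le_rfl, rfl⟩ ?_
    rintro _ ⟨K, hK, hBK, hKM, rfl⟩
    have hcompl : mcompl M K ≤ mcompl M B := fun y => Nat.sub_le_sub_left (hBK y) (M y)
    have hKx : M x - K x ≤ mint τ (mcompl M B) x := hτ.le_mint hK hcompl x
    have : K x ≤ M x := hKM x
    show M x - mint τ (mcompl M B) x ≤ K x
    omega

end IsMTopology

theorem compl_bd_eq_int_union_ext {X : Type*} (M : X → ℕ) (τ : Set (X → ℕ))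
    (hτ : IsMTopology M τ) (A : X → ℕ) (hA : A ≤ M) :
    ∀ x, M x - mbd M τ A x = max (mint τ A x) (mext M τ A x) := by
  intro x
  have hcl : mcl M τ A = mcompl M (mext M τ A) := hτ.mcl_eq_mcompl_mint_mcompl hA
  have hcl_compl : mcl M τ (mcompl M A) = mcompl M (mint τ A) := by
    rw [hτ.mcl_eq_mcompl_mint_mcompl mcompl_le, mcompl_mcompl hA]
  have hint : mint τ A x ≤ M x := hτ.mint_le_top A x
  have hext : mext M τ A x ≤ M x := hτ.mint_le_top (mcompl M A) x
  rw [mbd, hcl, hcl_compl]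
  simp only [mcompl]
  omega
end
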